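/- arXiv:2602.04282 — 2 statements merged into one kernel-verified Lean document; each statement's English description precedes it below -/
import Mathlib

section
/- Lemma 3.2 (uniform moment bounds for the separation times): for every real p ≥ 1 there exist constants c_p, c'_p > 0, independent of L, such that for all L ∈ ℕ, c_p ≤ E_Q[(τ̄^{(L)}_1)^p]^{1/p} ≤ c'_p, where τ̄^{(L)}_1 := 4^{−L} τ^{(L)}_1. -/
open MeasureTheory ProbabilityTheory Filter Set Topology
open scoped ENNReal NNReal

/-!
A run of `L` ones followed by a non-one ends at a given time `j ≥ L` with probability
`4⁻ᴸ · 3/4`. By a union bound, a run ends before time `4ᴸ` with probability at most `3/4`,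
so `τ̄ ≥ 1` with probability at least `1/4`.

For the upper bound, cut time into blocks of length `2L + 1`. Two run ends less than `L + 1`
apart are incompatible, so the events "a run ends at position `j`", for the last `L + 1`
positions `j` of a block, are disjoint: each block contains a run end with probability
`(L + 1) 4⁻ᴸ 3/4`, independently of the other blocks. Before time `k 4ᴸ` there are about
`k 4ᴸ / (2L + 1)` blocks, hence `P(τ̄ ≥ k) ≤ 3 e^{-3k/8}` uniformly in `L`, and every moment
of `τ̄` is bounded by `3 ∑ (k + 1)ᵖ e^{-3k/8}`.
-/

lemma lintegral_ofReal_rpow_le_tsum {α : Type*} [MeasurableSpace α] {μ : Measure α} {f : α → ℝ}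
    (hf : ∀ a, 0 ≤ f a) {G : ℕ → Set α} (hG : ∀ k, MeasurableSet (G k))
    (hfG : ∀ (k : ℕ) a, (k : ℝ) ≤ f a → a ∈ G k) {p : ℝ} (hp : 0 ≤ p) :
    ∫⁻ a, ENNReal.ofReal (f a) ^ p ∂μ ≤ ∑' k : ℕ, ((k : ℝ≥0∞) + 1) ^ p * μ (G k) := by
  have hpointwise : ∀ a, ENNReal.ofReal (f a) ^ p ≤
      ∑' k : ℕ, (G k).indicator (fun _ => ((k : ℝ≥0∞) + 1) ^ p) a := by
    intro a
    have hfloor : ENNReal.ofReal (f a) ≤ (⌊f a⌋₊ : ℝ≥0∞) + 1 := by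
      rw [← ENNReal.ofReal_natCast, ← ENNReal.ofReal_one, ← ENNReal.ofReal_add (by positivity)
        zero_le_one]
      exact ENNReal.ofReal_le_ofReal (Nat.lt_floor_add_one _).le
    calc ENNReal.ofReal (f a) ^ p ≤ ((⌊f a⌋₊ : ℝ≥0∞) + 1) ^ p := ENNReal.rpow_le_rpow hfloor hp
      _ = (G ⌊f a⌋₊).indicator (fun _ => ((⌊f a⌋₊ : ℝ≥0∞) + 1) ^ p) a :=
        (indicator_of_mem (hfG _ a (Nat.floor_le (hf a))) fun _ => _).symm
      _ ≤ _ := ENNReal.le_tsum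
        (f := fun k : ℕ => (G k).indicator (fun _ => ((k : ℝ≥0∞) + 1) ^ p) a) _
  calc ∫⁻ a, ENNReal.ofReal (f a) ^ p ∂μ
      ≤ ∫⁻ a, ∑' k : ℕ, (G k).indicator (fun _ => ((k : ℝ≥0∞) + 1) ^ p) a ∂μ :=
        lintegral_mono hpointwise
    _ = ∑' k : ℕ, ((k : ℝ≥0∞) + 1) ^ p * μ (G k) := by
      rw [lintegral_tsum fun k => (measurable_const.indicator (hG k)).aemeasurable]
      exact tsum_congr fun k => lintegral_indicator_const (hG k) _

lemma tsum_add_one_rpow_mul_pow_ne_top (p : ℝ) {r : ℝ} (hr0 : 0 < r) (hr1 : r < 1) :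
    ∑' k : ℕ, ((k : ℝ≥0∞) + 1) ^ p * ENNReal.ofReal r ^ k ≠ ⊤ := by
  set N := ⌈p⌉₊
  have hsummable : Summable fun k : ℕ => ((k : ℝ) + 1) ^ N * r ^ k := by
    have hgeom : Summable fun k : ℕ => (k : ℝ) ^ N * r ^ k :=
      summable_pow_mul_geometric_of_norm_lt_one N (by rwa [Real.norm_of_nonneg hr0.le])
    have hshift := (summable_nat_add_iff (f := fun k : ℕ => (k : ℝ) ^ N * r ^ k) 1).2 hgeom
    refine (hshift.mul_left r⁻¹).congr fun k => ?_
    rw [Nat.cast_add_one, pow_succ]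
    field_simp
  refine ne_top_of_le_ne_top (ENNReal.ofReal_tsum_of_nonneg (fun k => by positivity)
    hsummable ▸ ENNReal.ofReal_ne_top) (ENNReal.tsum_le_tsum fun k => ?_)
  rw [ENNReal.ofReal_mul (by positivity), ENNReal.ofReal_pow hr0.le, ENNReal.ofReal_pow
    (by positivity), ENNReal.ofReal_add (by positivity) zero_le_one, ENNReal.ofReal_natCast,
    ENNReal.ofReal_one]
  gcongr ?_ * _
  exact (ENNReal.rpow_le_rpow_of_exponent_le le_add_self (Nat.le_ceil p)).trans_eq
    (ENNReal.rpow_natCast _ _)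

namespace SeparationTime

variable {Ω : Type*} (ε : ℕ → Ω → ℤ) (L : ℕ)

def runEndsAt (j : ℕ) : Set Ω :=
  {a | (∀ i : ℕ, j - L ≤ i → i < j → ε i a = 1) ∧ (ε j a = -1 ∨ ε j a = 0)}

def runEndsIn (I : Finset ℕ) : Set Ω :=
  ⋃ j ∈ I, runEndsAt ε L j

/-- This is `0` when no run ends at all, which happens only on a null set
(`ae_exists_runEndsAt`). -/
noncomputable def firstRunEnd (a : Ω) : ℕ :=
  sInf {j : ℕ | L ≤ j ∧ a ∈ runEndsAt ε L j}

/-- The run ends whose whole run lies in the block `[(2L+1)m, (2L+1)(m+1))`. -/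
def window (m : ℕ) : Finset ℕ :=
  Finset.Icc ((2 * L + 1) * m + L) ((2 * L + 1) * m + 2 * L)

def noRunEndInWindows (n : ℕ) : Set Ω :=
  ⋂ m ∈ Finset.range n, (runEndsIn ε L (window L m))ᶜ

variable {ε L}

lemma runEndsAt_eq_biInter (j : ℕ) :
    runEndsAt ε L j =
      ⋂ i ∈ Finset.Icc (j - L) j, ε i ⁻¹' (if i = j then {-1, 0} else {1}) := by
  ext a
  simp only [runEndsAt, mem_iInter, Finset.mem_Icc, mem_preimage]
  constructor
  · rintro ⟨hrun, hend⟩ i ⟨hi, hij⟩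
    rcases hij.lt_or_eq with hij | rfl
    · simpa [hij.ne] using hrun i hi hij
    · simpa using hend
  · intro h
    exact ⟨fun i hi hij => by simpa [hij.ne] using h i ⟨hi, hij.le⟩,
      by simpa using h j ⟨Nat.sub_le j L, le_rfl⟩⟩

lemma measurableSet_runEndsAt_iSup {T : Set ℕ} {j : ℕ}
    (hT : ∀ i, j - L ≤ i → i ≤ j → i ∈ T) :
    MeasurableSet[⨆ i ∈ T, MeasurableSpace.comap (ε i) inferInstance] (runEndsAt ε L j) := by
  rw [runEndsAt_eq_biInter]
  refine Finset.measurableSet_biInter _ fun i hi => ?_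
  rw [Finset.mem_Icc] at hi
  exact le_iSup₂ (f := fun i (_ : i ∈ T) => MeasurableSpace.comap (ε i) inferInstance) i
    (hT i hi.1 hi.2) _ ⟨_, .of_discrete, rfl⟩

lemma measurableSet_runEndsIn_iSup {T : Set ℕ} {I : Finset ℕ}
    (hT : ∀ j ∈ I, ∀ i, j - L ≤ i → i ≤ j → i ∈ T) :
    MeasurableSet[⨆ i ∈ T, MeasurableSpace.comap (ε i) inferInstance] (runEndsIn ε L I) :=
  Finset.measurableSet_biUnion _ fun j hj => measurableSet_runEndsAt_iSup (hT j hj)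

lemma disjoint_runEndsAt {j k : ℕ} (hjk : j < k) (hkj : k ≤ j + L) :
    Disjoint (runEndsAt ε L j) (runEndsAt ε L k) := by
  refine disjoint_left.2 fun a ⟨_, hj⟩ ⟨hk, _⟩ => ?_
  have := hk j (by omega) hjk
  omega

lemma firstRunEnd_le {a : Ω} {j : ℕ} (hL : L ≤ j) (ha : a ∈ runEndsAt ε L j) :
    firstRunEnd ε L a ≤ j :=
  Nat.sInf_le ⟨hL, ha⟩

lemma firstRunEnd_mem {a : Ω} (h : ∃ j, L ≤ j ∧ a ∈ runEndsAt ε L j) :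
    L ≤ firstRunEnd ε L a ∧ a ∈ runEndsAt ε L (firstRunEnd ε L a) :=
  Nat.sInf_mem h

lemma lt_of_mem_window {m j : ℕ} (hj : j ∈ window L m) : j < (2 * L + 1) * (m + 1) := by
  rw [window, Finset.mem_Icc] at hj
  rw [mul_add_one]
  omega

lemma mem_noRunEndInWindows {a : Ω} {n : ℕ} (h : (2 * L + 1) * n ≤ firstRunEnd ε L a) :
    a ∈ noRunEndInWindows ε L n := by
  simp only [noRunEndInWindows, runEndsIn, mem_iInter, mem_compl_iff, mem_iUnion,
    Finset.mem_range, not_exists]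
  intro m hm j hj hrun
  have hjL : L ≤ j := by rw [window, Finset.mem_Icc] at hj; omega
  have := (firstRunEnd_le hjL hrun).trans_lt (lt_of_mem_window hj)
  have := Nat.mul_le_mul_left (2 * L + 1) (show m + 1 ≤ n by omega)
  omega

lemma noRunEnd_subset_noRunEndInWindows (n : ℕ) :
    {a | ∀ j, L ≤ j → a ∉ runEndsAt ε L j} ⊆ noRunEndInWindows ε L n := by
  intro a ha
  simp only [noRunEndInWindows, runEndsIn, mem_iInter, mem_compl_iff, mem_iUnion, not_exists]
  intro m _ j hj
  exact ha j (by rw [window, Finset.mem_Icc] at hj; omega)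

lemma measurableSet_noRunEndInWindows_iSup (n : ℕ) :
    MeasurableSet[⨆ i ∈ Iio ((2 * L + 1) * n), MeasurableSpace.comap (ε i) inferInstance]
      (noRunEndInWindows ε L n) := by
  refine Finset.measurableSet_biInter _ fun m hm => .compl <|
    measurableSet_runEndsIn_iSup fun j hj i _ hij => ?_
  have := Nat.mul_le_mul_left (2 * L + 1) (Finset.mem_range.1 hm)
  exact (hij.trans_lt (lt_of_mem_window hj)).trans_le this

variable [MeasurableSpace Ω] {Q : Measure Ω} {r s : ℝ≥0∞}

lemma measurableSet_runEndsAt (hmeas : ∀ i, Measurable (ε i)) (j : ℕ) :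
    MeasurableSet (runEndsAt ε L j) :=
  iSup₂_le (fun i _ => (hmeas i).comap_le) _
    (measurableSet_runEndsAt_iSup (T := univ) fun _ _ _ => mem_univ _)

lemma measurableSet_runEndsIn (hmeas : ∀ i, Measurable (ε i)) (I : Finset ℕ) :
    MeasurableSet (runEndsIn ε L I) :=
  Finset.measurableSet_biUnion _ fun j _ => measurableSet_runEndsAt hmeas j

lemma measurableSet_noRunEndInWindows (hmeas : ∀ i, Measurable (ε i)) (n : ℕ) :
    MeasurableSet (noRunEndInWindows ε L n) :=
  Finset.measurableSet_biInter _ fun _ _ => (measurableSet_runEndsIn hmeas _).compl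

lemma measure_runEndsAt (hindep : iIndepFun ε Q) (h1 : ∀ i, Q (ε i ⁻¹' {1}) = r)
    (hend : ∀ i, Q (ε i ⁻¹' {-1, 0}) = s) {j : ℕ} (hL : L ≤ j) :
    Q (runEndsAt ε L j) = r ^ L * s := by
  rw [runEndsAt_eq_biInter, hindep.measure_inter_preimage_eq_mul _ fun _ _ => .of_discrete,
    ← Finset.Ico_insert_right (Nat.sub_le j L), Finset.prod_insert (by simp), if_pos rfl, hend,
    Finset.prod_congr rfl fun i hi => by rw [if_neg (Finset.mem_Ico.1 hi).2.ne, h1],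
    Finset.prod_const, Nat.card_Ico, Nat.sub_sub_self hL, mul_comm]

lemma measure_runEndsIn_le (hindep : iIndepFun ε Q) (h1 : ∀ i, Q (ε i ⁻¹' {1}) = r)
    (hend : ∀ i, Q (ε i ⁻¹' {-1, 0}) = s) {I : Finset ℕ} (hI : ∀ j ∈ I, L ≤ j) :
    Q (runEndsIn ε L I) ≤ I.card * (r ^ L * s) := by
  calc Q (runEndsIn ε L I) ≤ ∑ j ∈ I, Q (runEndsAt ε L j) := measure_biUnion_finset_le _ _
    _ = I.card * (r ^ L * s) := by
      rw [Finset.sum_congr rfl fun j hj => measure_runEndsAt hindep h1 hend (hI j hj),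
        Finset.sum_const, nsmul_eq_mul]

lemma measure_runEndsIn_window (hmeas : ∀ i, Measurable (ε i)) (hindep : iIndepFun ε Q)
    (h1 : ∀ i, Q (ε i ⁻¹' {1}) = r) (hend : ∀ i, Q (ε i ⁻¹' {-1, 0}) = s) (m : ℕ) :
    Q (runEndsIn ε L (window L m)) = (L + 1) * (r ^ L * s) := by
  have hdisj : (window L m : Set ℕ).PairwiseDisjoint (runEndsAt ε L) := by
    intro j hj k hk hjk
    simp only [window, Finset.coe_Icc, mem_Icc] at hj hk
    rcases hjk.lt_or_gt with h | h
    · exact disjoint_runEndsAt h (by omega)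
    · exact (disjoint_runEndsAt h (by omega)).symm
  rw [runEndsIn, measure_biUnion_finset hdisj fun j _ => measurableSet_runEndsAt hmeas j,
    Finset.sum_congr rfl fun j hj => measure_runEndsAt hindep h1 hend ?_]
  · rw [Finset.sum_const, nsmul_eq_mul, window, Nat.card_Icc, show (2 * L + 1) * m + 2 * L + 1 - ((2 * L + 1) * m + L) = L + 1 by omega]
    push_cast
    rfl
  · simp only [window, Finset.mem_Icc] at hj
    omega

lemma measure_noRunEndInWindows [IsProbabilityMeasure Q] (hmeas : ∀ i, Measurable (ε i))
    (hindep : iIndepFun ε Q) (h1 : ∀ i, Q (ε i ⁻¹' {1}) = r)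
    (hend : ∀ i, Q (ε i ⁻¹' {-1, 0}) = s) (n : ℕ) :
    Q (noRunEndInWindows ε L n) = (1 - (L + 1) * (r ^ L * s)) ^ n := by
  induction n with
  | zero => simp [noRunEndInWindows]
  | succ n ih =>
    have hsplit : noRunEndInWindows ε L (n + 1) =
        noRunEndInWindows ε L n ∩ (runEndsIn ε L (window L n))ᶜ := by
      rw [noRunEndInWindows, Finset.range_add_one, Finset.set_biInter_insert, inter_comm]
      rfl
    have hwindow : MeasurableSet[⨆ i ∈ Ici ((2 * L + 1) * n),
        MeasurableSpace.comap (ε i) inferInstance] (runEndsIn ε L (window L n))ᶜ := by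
      refine (measurableSet_runEndsIn_iSup fun j hj i hi _ => ?_).compl
      simp only [window, Finset.mem_Icc] at hj
      exact mem_Ici.2 (by omega)
    have hindep_blocks := indep_iSup_of_disjoint (fun i => (hmeas i).comap_le) hindep.iIndep
      (Iio_disjoint_Ici (a := (2 * L + 1) * n) le_rfl)
    rw [hsplit, (Indep_iff _ _ _).1 hindep_blocks _ _
      (measurableSet_noRunEndInWindows_iSup n) hwindow, ih,
      prob_compl_eq_one_sub (measurableSet_runEndsIn hmeas _),
      measure_runEndsIn_window hmeas hindep h1 hend, pow_succ]

lemma ae_exists_runEndsAt [IsProbabilityMeasure Q] (hmeas : ∀ i, Measurable (ε i))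
    (hindep : iIndepFun ε Q) (h1 : ∀ i, Q (ε i ⁻¹' {1}) = r)
    (hend : ∀ i, Q (ε i ⁻¹' {-1, 0}) = s) (hr : r ≠ 0) (hs : s ≠ 0) :
    ∀ᵐ a ∂Q, ∃ j, L ≤ j ∧ a ∈ runEndsAt ε L j := by
  have hlt : 1 - (L + 1) * (r ^ L * s) < 1 :=
    ENNReal.sub_lt_self ENNReal.one_ne_top one_ne_zero (by simp [hr, hs])
  have hnull : Q {a | ∀ j, L ≤ j → a ∉ runEndsAt ε L j} = 0 :=
    le_zero_iff.1 <| ge_of_tendsto' (ENNReal.tendsto_pow_atTop_nhds_zero_of_lt_one hlt)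
      fun n => (measure_mono (noRunEnd_subset_noRunEndInWindows n)).trans_eq
        (measure_noRunEndInWindows hmeas hindep h1 hend n)
  filter_upwards [measure_eq_zero_iff_ae_notMem.1 hnull] with a ha
  simpa using ha

lemma one_sub_windowProb_pow_le (L k : ℕ) :
    (1 - ((L : ℝ≥0∞) + 1) * ((1 / 4) ^ L * (3 / 4))) ^ (k * 4 ^ L / (2 * L + 1)) ≤
      3 * ENNReal.ofReal (Real.exp (-(3 / 8))) ^ k := by
  set n := k * 4 ^ L / (2 * L + 1)
  set q : ℝ := ((L : ℝ) + 1) * ((1 / 4) ^ L * (3 / 4)) with hq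
  have hq_ofReal : ENNReal.ofReal q = ((L : ℝ≥0∞) + 1) * ((1 / 4) ^ L * (3 / 4)) := by
    rw [ENNReal.ofReal_mul (by positivity), ENNReal.ofReal_mul (by positivity),
      ENNReal.ofReal_pow (by norm_num), ENNReal.ofReal_add (by positivity) zero_le_one,
      ENNReal.ofReal_div_of_pos (by norm_num), ENNReal.ofReal_div_of_pos (by norm_num)]
    simp
  have h4L : (0 : ℝ) < 4 ^ L := by positivity
  have hL4 : (L : ℝ) + 1 ≤ 4 ^ L := by
    exact_mod_cast (Nat.lt_two_pow_self).trans_le (Nat.pow_le_pow_left (by norm_num) L)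
  have hq_eq : q = 3 * (L + 1) / (4 * 4 ^ L) := by
    rw [hq, one_div, inv_pow]; field_simp
  have hq0 : 0 ≤ q := by positivity
  have hq1 : q ≤ 3 / 4 := by
    rw [hq_eq, div_le_iff₀ (by positivity)]; nlinarith
  have hn : (k : ℝ) * 4 ^ L ≤ (2 * L + 1) * (n + 1) := by
    exact_mod_cast (Nat.lt_mul_div_succ (k * 4 ^ L) (by omega : 0 < 2 * L + 1)).le
  have hqn : 3 / 8 * (k : ℝ) ≤ q * (n + 1) := by
    rw [hq_eq, div_mul_eq_mul_div _ _ ((n : ℝ) + 1), le_div_iff₀ (by positivity)]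
    nlinarith [(n.cast_nonneg : (0 : ℝ) ≤ n)]
  have hexp : Real.exp (3 / 4) ≤ 3 :=
    (Real.exp_le_exp.2 (by norm_num)).trans (Real.exp_one_lt_d9.le.trans (by norm_num))
  have hreal : (1 - q) ^ n ≤ 3 * Real.exp (-(3 / 8)) ^ k :=
    calc (1 - q) ^ n ≤ Real.exp (-q) ^ n :=
          pow_le_pow_left₀ (by linarith) (by linarith [Real.add_one_le_exp (-q)]) n
      _ ≤ Real.exp (3 / 4) * Real.exp (-(3 / 8)) ^ k := by
          rw [← Real.exp_nat_mul, ← Real.exp_nat_mul, ← Real.exp_add]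
          exact Real.exp_le_exp.2 (by nlinarith)
      _ ≤ 3 * Real.exp (-(3 / 8)) ^ k := by gcongr
  rw [← hq_ofReal, ← ENNReal.ofReal_one, ← ENNReal.ofReal_sub _ hq0, ← ENNReal.ofReal_pow
    (by linarith), ← ENNReal.ofReal_pow (Real.exp_nonneg _), ← ENNReal.ofReal_ofNat 3,
    ← ENNReal.ofReal_mul (by norm_num)]
  exact ENNReal.ofReal_le_ofReal hreal

lemma quarter_le_lintegral_firstRunEnd_rpow [IsProbabilityMeasure Q]
    (hmeas : ∀ i, Measurable (ε i)) (hindep : iIndepFun ε Q) (h1 : ∀ i, Q (ε i ⁻¹' {1}) = 1 / 4)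
    (hend : ∀ i, Q (ε i ⁻¹' {-1, 0}) = 3 / 4) {p : ℝ} (hp : 0 ≤ p) :
    1 / 4 ≤ ∫⁻ a, ENNReal.ofReal ((firstRunEnd ε L a : ℝ) / 4 ^ L) ^ p ∂Q := by
  set U := runEndsIn ε L (Finset.Ico L (4 ^ L))
  have hU : Q U ≤ 3 / 4 :=
    calc Q U ≤ (Finset.Ico L (4 ^ L)).card * ((1 / 4) ^ L * (3 / 4)) :=
          measure_runEndsIn_le hindep h1 hend fun j hj => (Finset.mem_Ico.1 hj).1
      _ ≤ 4 ^ L * ((1 / 4) ^ L * (3 / 4)) := by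
          gcongr
          exact_mod_cast (Nat.card_Ico L (4 ^ L)).trans_le (Nat.sub_le _ _)
      _ = 3 / 4 := by
          rw [← mul_assoc, ← mul_pow, ENNReal.mul_div_cancel (by norm_num) (by norm_num),
            one_pow, one_mul]
  have hUc : 1 / 4 ≤ Q Uᶜ := by
    rw [prob_compl_eq_one_sub (measurableSet_runEndsIn hmeas _)]
    calc (1 : ℝ≥0∞) / 4 = 1 - 3 / 4 := by
          refine ENNReal.eq_sub_of_add_eq (ENNReal.div_ne_top (by simp) (by simp)) ?_
          rw [ENNReal.div_add_div_same, ENNReal.div_eq_one_iff (by simp) (by simp)]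
          norm_num
      _ ≤ 1 - Q U := tsub_le_tsub_left hU 1
  have hlarge : ∀ᵐ a ∂Q, a ∈ Uᶜ → 1 ≤ ENNReal.ofReal ((firstRunEnd ε L a : ℝ) / 4 ^ L) ^ p := by
    filter_upwards [ae_exists_runEndsAt hmeas hindep h1 hend (by norm_num) (by norm_num)]
      with a ha haU
    obtain ⟨hL, hrun⟩ := firstRunEnd_mem ha
    have h4L : 4 ^ L ≤ firstRunEnd ε L a := by
      by_contra h
      exact haU (mem_biUnion (Finset.mem_Ico.2 ⟨hL, not_le.1 h⟩) hrun)
    have hone : 1 ≤ ENNReal.ofReal ((firstRunEnd ε L a : ℝ) / 4 ^ L) := by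
      rw [ENNReal.one_le_ofReal, one_le_div (by positivity)]
      exact_mod_cast h4L
    simpa using ENNReal.rpow_le_rpow hone hp
  calc 1 / 4 ≤ Q Uᶜ := hUc
    _ = ∫⁻ a, Uᶜ.indicator 1 a ∂Q :=
        (lintegral_indicator_one (measurableSet_runEndsIn hmeas _).compl).symm
    _ ≤ _ := lintegral_mono_ae <| hlarge.mono fun a ha =>
        indicator_apply_le' (fun haU => ha haU) fun _ => zero_le

lemma lintegral_firstRunEnd_rpow_le [IsProbabilityMeasure Q]
    (hmeas : ∀ i, Measurable (ε i)) (hindep : iIndepFun ε Q) (h1 : ∀ i, Q (ε i ⁻¹' {1}) = 1 / 4)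
    (hend : ∀ i, Q (ε i ⁻¹' {-1, 0}) = 3 / 4) {p : ℝ} (hp : 0 ≤ p) :
    ∫⁻ a, ENNReal.ofReal ((firstRunEnd ε L a : ℝ) / 4 ^ L) ^ p ∂Q ≤
      3 * ∑' k : ℕ, ((k : ℝ≥0∞) + 1) ^ p * ENNReal.ofReal (Real.exp (-(3 / 8))) ^ k := by
  have hG : ∀ (k : ℕ) a, (k : ℝ) ≤ (firstRunEnd ε L a : ℝ) / 4 ^ L →
      a ∈ noRunEndInWindows ε L (k * 4 ^ L / (2 * L + 1)) := by
    intro k a hk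
    rw [le_div_iff₀ (by positivity)] at hk
    exact mem_noRunEndInWindows ((Nat.mul_div_le _ _).trans (by exact_mod_cast hk))
  calc _ ≤ ∑' k : ℕ, ((k : ℝ≥0∞) + 1) ^ p *
          Q (noRunEndInWindows ε L (k * 4 ^ L / (2 * L + 1))) :=
        lintegral_ofReal_rpow_le_tsum (fun _ => by positivity)
          (fun _ => measurableSet_noRunEndInWindows hmeas _) hG hp
    _ ≤ ∑' k : ℕ, ((k : ℝ≥0∞) + 1) ^ p * (3 * ENNReal.ofReal (Real.exp (-(3 / 8))) ^ k) := by
        gcongr with k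
        rw [measure_noRunEndInWindows hmeas hindep h1 hend]
        exact one_sub_windowProb_pow_le L k
    _ = _ := by
        rw [← ENNReal.tsum_mul_left]
        exact tsum_congr fun k => mul_left_comm _ _ _

end SeparationTime

open SeparationTime in
theorem separation_time_moment_bounds_general
    {Ω : Type*} [MeasurableSpace Ω] (Q : Measure Ω) [IsProbabilityMeasure Q]
    -- i.i.d. coordinates with values in {−1,0,1}
    (ε : ℕ → Ω → ℤ) (hmeas : ∀ i, Measurable (ε i))
    (hindep : iIndepFun ε Q)
    (h1 : ∀ i, Q {a | ε i a = 1} = 1 / 4)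
    (hm1 : ∀ i, Q {a | ε i a = -1} = 1 / 4)
    (h0 : ∀ i, Q {a | ε i a = 0} = 1 / 2)
    -- the separation time τ^{(L)}
    (τ : ℕ → Ω → ℕ)
    (hτ : ∀ L a, τ L a = sInf {j : ℕ | L ≤ j ∧
      (∀ i : ℕ, j - L ≤ i → i < j → ε i a = 1) ∧ (ε j a = -1 ∨ ε j a = 0)}) :
    ∀ p : ℝ, 1 ≤ p →
      ∃ c c' : ℝ≥0∞, 0 < c ∧ c' < ⊤ ∧ ∀ L : ℕ,
        c ≤ (∫⁻ a, ENNReal.ofReal ((τ L a : ℝ) / 4 ^ L) ^ p ∂Q) ^ (1 / p) ∧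
        (∫⁻ a, ENNReal.ofReal ((τ L a : ℝ) / 4 ^ L) ^ p ∂Q) ^ (1 / p) ≤ c' := by
  obtain rfl : τ = firstRunEnd ε := funext₂ hτ
  have hend : ∀ i, Q (ε i ⁻¹' {-1, 0}) = 3 / 4 := fun i => by
    rw [insert_eq, preimage_union, measure_union ((disjoint_singleton.2 (by norm_num)).preimage _)
      (hmeas i (measurableSet_singleton 0))]
    change Q {a | ε i a = -1} + Q {a | ε i a = 0} = 3 / 4
    rw [hm1, h0, show (1 : ℝ≥0∞) / 2 = 2 / 4 by rw [ENNReal.div_eq_div_iff] <;> norm_num,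
      ENNReal.div_add_div_same]
    norm_num
  intro p hp
  have hp0 : 0 < p := by linarith
  have hM := tsum_add_one_rpow_mul_pow_ne_top p (Real.exp_pos (-(3 / 8)))
    (Real.exp_lt_one_iff.2 (by norm_num))
  refine ⟨1 / 4, _, by norm_num, ENNReal.rpow_lt_top_of_nonneg (by positivity)
    (ENNReal.mul_ne_top (by simp) hM), fun L => ⟨?_, ENNReal.rpow_le_rpow
      (lintegral_firstRunEnd_rpow_le hmeas hindep h1 hend hp0.le) (by positivity)⟩⟩
  calc (1 : ℝ≥0∞) / 4 = (1 / 4) ^ (1 : ℝ) := (ENNReal.rpow_one _).symm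
    _ ≤ (1 / 4) ^ (1 / p) :=
        ENNReal.rpow_le_rpow_of_exponent_ge (by norm_num) ((div_le_one hp0).2 hp)
    _ ≤ _ := ENNReal.rpow_le_rpow (quarter_le_lintegral_firstRunEnd_rpow hmeas hindep h1 hend
        hp0.le) (by positivity)

/-- Lemma 3.2: uniform `L^p`-moment bounds for the rescaled separation times
`τ̄^{(L)} := 4^{−L} τ^{(L)}`: for every real `p ≥ 1` there are constants
`0 < c ≤ c' < ∞`, independent of `L`, with `c ≤ E_Q[(τ̄^{(L)})^p]^{1/p} ≤ c'`. -/
theorem separation_time_moment_bounds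
    {Ω : Type*} [MeasurableSpace Ω] (Q : Measure Ω) [IsProbabilityMeasure Q]
    -- i.i.d. coordinates with values in {−1,0,1}
    (ε : ℕ → Ω → ℤ) (hmeas : ∀ i, Measurable (ε i))
    (hval : ∀ i a, ε i a = -1 ∨ ε i a = 0 ∨ ε i a = 1)
    (hindep : iIndepFun ε Q)
    (h1 : ∀ i, Q {a | ε i a = 1} = 1 / 4)
    (hm1 : ∀ i, Q {a | ε i a = -1} = 1 / 4)
    (h0 : ∀ i, Q {a | ε i a = 0} = 1 / 2)
    -- the separation time τ^{(L)}
    (τ : ℕ → Ω → ℕ)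
    (hτ : ∀ L a, τ L a = sInf {j : ℕ | L ≤ j ∧
      (∀ i : ℕ, j - L ≤ i → i < j → ε i a = 1) ∧ (ε j a = -1 ∨ ε j a = 0)}) :
    ∀ p : ℝ, 1 ≤ p →
      ∃ c c' : ℝ≥0∞, 0 < c ∧ c' < ⊤ ∧ ∀ L : ℕ,
        c ≤ (∫⁻ a, ENNReal.ofReal ((τ L a : ℝ) / 4 ^ L) ^ p ∂Q) ^ (1 / p) ∧
        (∫⁻ a, ENNReal.ofReal ((τ L a : ℝ) / 4 ^ L) ^ p ∂Q) ^ (1 / p) ≤ c' :=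
  separation_time_moment_bounds_general Q ε hmeas hindep h1 hm1 h0 τ hτ
end

section
/- Lindeberg-type estimate for the reinforced martingale (proof of Lemma 3.7): for 0 < p < 3/4 and a := 2p − 1, with a_1 := 1, a_n := Γ(a+1)Γ(n)/Γ(n+a) for n ≥ 2, and ν_n := Σ_{k=1}^n a_k², one has Σ_{n=1}^∞ ν_n^{−2} a_n⁴ < ∞ and consequently ν_n^{−2} Σ_{k=1}^n a_k⁴ → 0 as n → ∞. -/
open MeasureTheory ProbabilityTheory Filter Set Topology

/-!
Everything is driven by the ratio `a_{n+1} / a_n = n / (n + a)`. Because `a > -1` one has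
`(n - 2) a_{n+1}² ≤ n a_n²`, which gives `n a_n² ≤ 3 ν_n` by induction, hence
`ν_n⁻² a_n⁴ ≤ 9 / n²`. Because `a < 1/2`, `n a_n²` is eventually nondecreasing, so
`a_n² ≳ 1/n` and `ν_n → ∞`. Finally `ν_n⁻² a_k⁴ ≤ ν_k⁻² a_k⁴` for `k ≤ n`, so the second claim
follows from the first by dominated convergence for series.
-/

section PartialSums

variable {b : ℕ → ℝ}

theorem summable_inv_sq_mul_sq_of_mul_le_mul_sum {C : ℝ} (hb : ∀ n, 0 ≤ b n) (hC : 0 ≤ C)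
    (h : ∀ n, 1 ≤ n → n * b n ≤ C * ∑ k ∈ Finset.Icc 1 n, b k) :
    Summable fun n => (∑ k ∈ Finset.Icc 1 n, b k)⁻¹ ^ 2 * b n ^ 2 := by
  refine .of_nonneg_of_le (fun n => by positivity) (fun n => ?_)
    ((Real.summable_one_div_nat_pow.mpr one_lt_two).mul_left (C ^ 2))
  set S := ∑ k ∈ Finset.Icc 1 n, b k
  rcases Nat.eq_zero_or_pos n with rfl | hn
  · simp [S]
  have hS : 0 ≤ S := Finset.sum_nonneg fun k _ => hb k
  have hratio : b n / S ≤ C / n := by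
    rcases hS.eq_or_lt with hS0 | hS0
    · rw [← hS0, div_zero]; positivity
    · rw [div_le_div_iff₀ hS0 (by positivity)]; linarith [h n hn]
  calc S⁻¹ ^ 2 * b n ^ 2 = (b n / S) ^ 2 := by ring
    _ ≤ (C / n) ^ 2 := pow_le_pow_left₀ (div_nonneg (hb n) hS) hratio 2
    _ = C ^ 2 * (1 / (n : ℝ) ^ 2) := by ring

theorem tendsto_inv_sq_mul_sum_sq_of_summable (hb : ∀ n, 0 ≤ b n)
    (hS : Tendsto (fun n => ∑ k ∈ Finset.Icc 1 n, b k) atTop atTop)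
    (hsum : Summable fun n => (∑ k ∈ Finset.Icc 1 n, b k)⁻¹ ^ 2 * b n ^ 2) :
    Tendsto (fun n => (∑ k ∈ Finset.Icc 1 n, b k)⁻¹ ^ 2 * ∑ k ∈ Finset.Icc 1 n, b k ^ 2)
      atTop (𝓝 0) := by
  set S : ℕ → ℝ := fun n => ∑ k ∈ Finset.Icc 1 n, b k
  let f : ℕ → ℕ → ℝ := fun n => (Finset.Icc 1 n : Set ℕ).indicator fun k => (S n)⁻¹ ^ 2 * b k ^ 2
  have hf : ∀ n, (S n)⁻¹ ^ 2 * ∑ k ∈ Finset.Icc 1 n, b k ^ 2 = ∑' k, f n k := fun n => by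
    rw [Finset.mul_sum, sum_eq_tsum_indicator]
  have hS_mono : Monotone S := fun m n hmn =>
    Finset.sum_le_sum_of_subset_of_nonneg (Finset.Icc_subset_Icc_right hmn) fun k _ _ => hb k
  have hf_le : ∀ n k, f n k ≤ (S k)⁻¹ ^ 2 * b k ^ 2 := fun n k => by
    simp only [f, Set.indicator_apply, Finset.coe_Icc, Set.mem_Icc]
    split_ifs with hk
    · rcases (hb k).eq_or_lt with hbk | hbk
      · simp [← hbk]
      have hSk : 0 < S k :=
        hbk.trans_le (Finset.single_le_sum (fun i _ => hb i) (Finset.mem_Icc.mpr ⟨hk.1, le_rfl⟩))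
      have hSn : S k ≤ S n := hS_mono hk.2
      gcongr
      exact inv_nonneg.mpr (hSk.le.trans hSn)
    · positivity
  have hf_nonneg : ∀ n k, 0 ≤ f n k := fun n k =>
    Set.indicator_nonneg (fun k _ => by positivity) k
  have hf_lim : ∀ k, Tendsto (f · k) atTop (𝓝 0) := fun k => by
    have hlim := (hS.inv_tendsto_atTop.pow 2).mul_const (b k ^ 2)
    rw [zero_pow two_ne_zero, zero_mul] at hlim
    refine squeeze_zero (fun n => hf_nonneg n k) (fun n => ?_) hlim
    exact Set.indicator_le_self' (fun _ _ => by positivity) k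
  have hlim := tendsto_tsum_of_dominated_convergence hsum hf_lim
    (Eventually.of_forall fun n k => (Real.norm_of_nonneg (hf_nonneg n k)).trans_le (hf_le n k))
  rw [tsum_zero] at hlim
  exact hlim.congr fun n => (hf n).symm

end PartialSums

theorem Real.add_mul_Gamma_add_one_div_Gamma_add_one_add {s a : ℝ} (hs : s ≠ 0) (hsa : 0 < s + a) :
    (s + a) * (Real.Gamma (s + 1) / Real.Gamma (s + 1 + a)) =
      s * (Real.Gamma s / Real.Gamma (s + a)) := by
  rw [Real.Gamma_add_one hs, add_right_comm, Real.Gamma_add_one hsa.ne']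
  have := (Real.Gamma_pos_of_pos hsa).ne'
  field_simp

theorem add_mul_succ_eq_mul_of_eq_Gamma_ratio {a : ℝ} (ha : -1 < a) {x : ℕ → ℝ} (hx1 : x 1 = 1)
    (hx : ∀ n : ℕ, 2 ≤ n → x n = Real.Gamma (a + 1) * Real.Gamma n / Real.Gamma (n + a))
    (n : ℕ) (hn : 1 ≤ n) : (n + a) * x (n + 1) = n * x n := by
  have hform : ∀ m : ℕ, 1 ≤ m →
      x m = Real.Gamma (a + 1) * (Real.Gamma m / Real.Gamma (m + a)) := by
    intro m hm
    rcases hm.eq_or_lt with rfl | hm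
    · have := (Real.Gamma_pos_of_pos (by linarith : 0 < a + 1)).ne'
      rw [hx1, Nat.cast_one, Real.Gamma_one, add_comm 1 a, mul_one_div_cancel this]
    · rw [hx m hm, mul_div_assoc]
  have hn' : (1 : ℝ) ≤ n := by exact_mod_cast hn
  rw [hform (n + 1) (by omega), hform n hn, Nat.cast_succ]
  linear_combination Real.Gamma (a + 1) *
    Real.add_mul_Gamma_add_one_div_Gamma_add_one_add (a := a) (by linarith : (n : ℝ) ≠ 0)
      (by linarith)

namespace RatioRecurrence

variable {a : ℝ} {x : ℕ → ℝ} (hx : ∀ n : ℕ, 1 ≤ n → (n + a) * x (n + 1) = n * x n)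
include hx

theorem add_sq_mul_sq_succ {n : ℕ} (hn : 1 ≤ n) :
    (n + a) ^ 2 * x (n + 1) ^ 2 = n ^ 2 * x n ^ 2 := by
  rw [← mul_pow, hx n hn, mul_pow]

theorem ne_zero (hx1 : x 1 = 1) {n : ℕ} (hn : 1 ≤ n) : x n ≠ 0 := by
  induction n, hn using Nat.le_induction with
  | base => simp [hx1]
  | succ n hn ih =>
    intro h0
    have := hx n hn
    rw [h0, mul_zero, eq_comm, mul_eq_zero] at this
    exact this.elim (by positivity) ih

theorem mul_sq_le_three_mul_sum_sq (ha : -1 < a) (hx1 : x 1 = 1) {n : ℕ} (hn : 1 ≤ n) :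
    n * x n ^ 2 ≤ 3 * ∑ k ∈ Finset.Icc 1 n, x k ^ 2 := by
  induction n, hn using Nat.le_induction with
  | base => simp [hx1]
  | succ n hn ih =>
    have hn' : (1 : ℝ) ≤ n := by exact_mod_cast hn
    have hstep : ((n : ℝ) - 2) * x (n + 1) ^ 2 ≤ n * x n ^ 2 := by
      have hpos : (0 : ℝ) < (n + a) ^ 2 := by nlinarith
      have key : (n + a) ^ 2 * (n * x n ^ 2 - (n - 2) * x (n + 1) ^ 2) =
          n * x n ^ 2 * (2 * n * (1 + a) + a ^ 2) := by
        linear_combination (2 - (n : ℝ)) * add_sq_mul_sq_succ hx hn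
      have : 0 ≤ (n + a) ^ 2 * (n * x n ^ 2 - (n - 2) * x (n + 1) ^ 2) := by
        rw [key]; exact mul_nonneg (by positivity) (by nlinarith)
      linarith [(mul_nonneg_iff_of_pos_left hpos).mp this]
    rw [Finset.sum_Icc_succ_top (by omega)]
    push_cast
    linarith

theorem mul_sq_le_succ_mul_sq (ha : -1 < a) {n : ℕ} (hn : 1 ≤ n) (hna : a ^ 2 ≤ n * (1 - 2 * a)) :
    n * x n ^ 2 ≤ (n + 1) * x (n + 1) ^ 2 := by
  have hn' : (1 : ℝ) ≤ n := by exact_mod_cast hn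
  have hpos : (0 : ℝ) < (n + a) ^ 2 := by nlinarith
  have key : (n + a) ^ 2 * ((n + 1) * x (n + 1) ^ 2 - n * x n ^ 2) =
      n * x n ^ 2 * (n * (1 - 2 * a) - a ^ 2) := by
    linear_combination ((n : ℝ) + 1) * add_sq_mul_sq_succ hx hn
  have : 0 ≤ (n + a) ^ 2 * ((n + 1) * x (n + 1) ^ 2 - n * x n ^ 2) := by
    rw [key]; exact mul_nonneg (by positivity) (by linarith)
  linarith [(mul_nonneg_iff_of_pos_left hpos).mp this]

theorem tendsto_sum_sq_atTop (ha : -1 < a) (ha' : a < 1 / 2) (hx1 : x 1 = 1) :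
    Tendsto (fun n => ∑ k ∈ Finset.Icc 1 n, x k ^ 2) atTop atTop := by
  obtain ⟨K, hK1, hK⟩ : ∃ K : ℕ, 1 ≤ K ∧ a ^ 2 / (1 - 2 * a) ≤ K := by
    obtain ⟨K, hK⟩ := exists_nat_ge (a ^ 2 / (1 - 2 * a))
    exact ⟨max K 1, le_max_right _ _, hK.trans (by exact_mod_cast le_max_left _ _)⟩
  rw [div_le_iff₀ (by linarith)] at hK
  have hgrowth : ∀ n, K ≤ n → K * x K ^ 2 ≤ n * x n ^ 2 := by
    intro n hn
    induction n, hn using Nat.le_induction with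
    | base => rfl
    | succ n hn ih =>
      have hKn : (K : ℝ) ≤ n := by exact_mod_cast hn
      push_cast
      exact ih.trans (mul_sq_le_succ_mul_sq hx ha (hK1.trans hn) (by nlinarith))
  have hc : 0 < K * x K ^ 2 := by
    have := ne_zero hx hx1 hK1
    positivity
  have hns : ¬ Summable fun k => x (k + 1) ^ 2 := by
    intro hs
    refine Real.not_summable_one_div_natCast ((summable_nat_add_iff 1).mp ?_)
    refine (hs.div_const (K * x K ^ 2)).of_norm_bounded_eventually_nat ?_
    filter_upwards [eventually_ge_atTop K] with n hn
    rw [Real.norm_of_nonneg (by positivity), le_div_iff₀ hc]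
    have := hgrowth (n + 1) (by omega)
    push_cast at this ⊢
    rw [one_div_mul_eq_div, div_le_iff₀ (by positivity)]
    linarith
  refine ((not_summable_iff_tendsto_nat_atTop_of_nonneg fun k => sq_nonneg (x (k + 1))).mp
    hns).congr fun n => ?_
  rw [Finset.range_eq_Ico, Finset.sum_Ico_add' (fun k => x k ^ 2), zero_add,
    Finset.Ico_add_one_right_eq_Icc]

end RatioRecurrence

/-- Lindeberg-type estimate for the reinforced martingale (proof of Lemma 3.7): for
`0 < p < 3/4` and `a = 2p − 1`, with `a_n = Γ(a+1)Γ(n)/Γ(n+a)` for `n ≥ 2` and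
`ν_n = Σ_{k=1}^n a_k²`, the series `Σ_n ν_n^{−2} a_n⁴` converges and consequently
`ν_n^{−2} Σ_{k=1}^n a_k⁴ → 0`. -/
theorem reinforced_lindeberg_estimate
    (p : ℝ) (hp0 : 0 < p) (hp34 : p < 3 / 4) (a : ℝ) (ha : a = 2 * p - 1)
    (aseq : ℕ → ℝ) (haseq1 : aseq 1 = 1)
    (haseq : ∀ n : ℕ, 2 ≤ n →
      aseq n = Real.Gamma (a + 1) * Real.Gamma n / Real.Gamma (n + a))
    (ν : ℕ → ℝ) (hν : ∀ n, ν n = ∑ k ∈ Finset.Icc 1 n, (aseq k) ^ 2) :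
    Summable (fun n : ℕ => (ν (n + 1))⁻¹ ^ 2 * (aseq (n + 1)) ^ 4) ∧
    Tendsto (fun n : ℕ => (ν n)⁻¹ ^ 2 * ∑ k ∈ Finset.Icc 1 n, (aseq k) ^ 4)
      atTop (𝓝 0) := by
  have ha1 : -1 < a := by linarith
  have ha2 : a < 1 / 2 := by linarith
  have hrec := add_mul_succ_eq_mul_of_eq_Gamma_ratio ha1 haseq1 haseq
  obtain rfl : ν = fun n => ∑ k ∈ Finset.Icc 1 n, aseq k ^ 2 := funext hν
  have hsum := summable_inv_sq_mul_sq_of_mul_le_mul_sum (b := fun k => aseq k ^ 2)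
    (fun n => sq_nonneg _) zero_le_three
    fun n => RatioRecurrence.mul_sq_le_three_mul_sum_sq hrec ha1 haseq1
  refine ⟨by simpa only [← pow_mul] using (summable_nat_add_iff 1).mpr hsum, ?_⟩
  simpa only [← pow_mul] using tendsto_inv_sq_mul_sum_sq_of_summable (b := fun k => aseq k ^ 2)
    (fun n => sq_nonneg _) (RatioRecurrence.tendsto_sum_sq_atTop hrec ha1 ha2 haseq1) hsum
end
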